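/- Define the modified switch graph Ḡ by adding a new vertex d̄, redirecting both successors of every dead end w of G to d̄, installing the self-loop s̄₀(d) = s̄₁(d) = d at the old destination d, and leaving all other successors unchanged. Then the run in G from o terminates at d if and only if the run in Ḡ from o does not terminate at d̄. -/

import Mathlib

open scoped Classical

/-- A switch graph: every vertex has an even successor `s0 v` and an odd successor `s1 v`. -/
structure SwitchGraph (V : Type) where
  s0 : V → V
  s1 : V → V

namespace SwitchGraph

variable {V : Type}

/-- The successor of `v` along the edge of parity `b` (`false` = even, `true` = odd). -/
def succ (G : SwitchGraph V) (v : V) (b : Bool) : V :=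
  if b then G.s1 v else G.s0 v

/-- One step of the run: move to the currently active successor and flip the switch. -/
def step [DecidableEq V] (G : SwitchGraph V) (p : V × (V → Bool)) : V × (V → Bool) :=
  (G.succ p.1 (p.2 p.1), Function.update p.2 p.1 (!p.2 p.1))

/-- The state of the run after `n` steps, starting at `o` with all switches even,
stopping (freezing) upon reaching `d`. -/
def run [DecidableEq V] (G : SwitchGraph V) (o d : V) (n : ℕ) : V × (V → Bool) :=
  (fun p => if p.1 = d then p else G.step p)^[n] (o, fun _ => false)

/-- The run from `o` terminates at `d`. -/
def Terminates [DecidableEq V] (G : SwitchGraph V) (o d : V) : Prop :=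
  ∃ n, (G.run o d n).1 = d

/-- Number of traversals of the outgoing edge of `v` of parity `b` during
the first `N` steps of the run. -/
def traversals [DecidableEq V] (G : SwitchGraph V) (o d : V) (N : ℕ) (v : V) (b : Bool) : ℕ :=
  ((Finset.range N).filter
    (fun n => (G.run o d n).1 = v ∧ v ≠ d ∧ (G.run o d n).2 v = b)).card

/-- Total weight on edges leaving `v`. -/
def outflow {M : Type} [AddCommMonoid M] (x : V → Bool → M) (v : V) : M :=
  x v false + x v true

/-- Total weight on edges entering `v`. -/
def inflow [Fintype V] [DecidableEq V] (G : SwitchGraph V) {M : Type} [AddCommMonoid M]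
    (x : V → Bool → M) (v : V) : M :=
  ∑ u : V, ∑ b : Bool, if G.succ u b = v then x u b else 0

/-- A switching flow: flow conservation of value 1 from `o` to `d`, together with the
balancing condition `x v true ≤ x v false ≤ x v true + 1` at every vertex. -/
def IsSwitchingFlow [Fintype V] [DecidableEq V] (G : SwitchGraph V) (o d : V)
    (x : V → Bool → ℕ) : Prop :=
  (∀ v, outflow x v + (if v = d then 1 else 0) = G.inflow x v + (if v = o then 1 else 0)) ∧
  (∀ v, x v true ≤ x v false ∧ x v false ≤ x v true + 1)

/-- The edge relation of the underlying directed graph `(V, E)`. -/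
def stepRel (G : SwitchGraph V) (a b : V) : Prop :=
  G.s0 a = b ∨ G.s1 a = b

/-- A dead end: a vertex with no directed path to `d` in `(V, E)`. -/
def DeadEnd (G : SwitchGraph V) (d w : V) : Prop :=
  ¬ Relation.ReflTransGen G.stepRel w d

/-- There is a directed walk of length `k` from `w` to `d` in `(V, E)`. -/
def Chain (G : SwitchGraph V) (w d : V) (k : ℕ) : Prop :=
  ∃ f : ℕ → V, f 0 = w ∧ f k = d ∧ ∀ i < k, G.stepRel (f i) (f (i + 1))

end SwitchGraph

open SwitchGraph

/-!
As long as the run of `G` has visited neither `d`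
nor a dead end, the run of the modified graph follows it step by step. A terminating run of `G`
never visits a dead end, so the modified run reaches `d` and is then trapped by the self-loop
there, never reaching `d̄`. A nonterminating run of `G` must visit a dead end: otherwise the
vertices it visits infinitely often, a nonempty set since `V` is finite, would be closed under
both successors, because the switch at such a vertex alternates between its visits; they would
then include `d`. The modified run leaves that dead end for `d̄`.
-/

namespace SwitchGraph

theorem stepRel_succ {V : Type} (G : SwitchGraph V) (v : V) (b : Bool) :
    G.stepRel v (G.succ v b) := by
  cases b
  · exact Or.inl rfl
  · exact Or.inr rfl

variable {V : Type} [DecidableEq V] {G : SwitchGraph V} {o d : V} {n m : ℕ}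

open Filter Relation

theorem run_succ (n : ℕ) :
    G.run o d (n + 1) =
      if (G.run o d n).1 = d then G.run o d n else G.step (G.run o d n) := by
  exact Function.iterate_succ_apply' _ _ _

theorem run_succ_of_ne (h : (G.run o d n).1 ≠ d) : G.run o d (n + 1) = G.step (G.run o d n) := by
  rw [run_succ, if_neg h]

theorem fst_run_succ_of_ne (h : (G.run o d n).1 ≠ d) :
    (G.run o d (n + 1)).1 = G.succ (G.run o d n).1 ((G.run o d n).2 (G.run o d n).1) := by
  rw [run_succ_of_ne h]; rfl

theorem fst_run_of_le (h : (G.run o d n).1 = d) (hnm : n ≤ m) : (G.run o d m).1 = d := by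
  induction m, hnm using Nat.le_induction with
  | base => exact h
  | succ m _ ih => rwa [run_succ, if_pos ih]

theorem reflTransGen_run_of_le (hnm : n ≤ m) :
    ReflTransGen G.stepRel (G.run o d n).1 (G.run o d m).1 := by
  induction m, hnm using Nat.le_induction with
  | base => exact .refl
  | succ m _ ih =>
    by_cases hd : (G.run o d m).1 = d
    · rwa [run_succ, if_pos hd]
    · exact ih.tail (fst_run_succ_of_ne hd ▸ G.stepRel_succ _ _)

theorem not_deadEnd_run_of_terminates (ht : G.Terminates o d) (n : ℕ) :
    ¬ G.DeadEnd d (G.run o d n).1 := by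
  obtain ⟨N, hN⟩ := ht
  have hpath := reflTransGen_run_of_le (G := G) (o := o) (d := d) (le_max_left n N)
  rw [fst_run_of_le hN (le_max_right n N)] at hpath
  exact not_not_intro hpath

theorem snd_run_succ_of_ne {v : V} (h : (G.run o d n).1 ≠ v) :
    (G.run o d (n + 1)).2 v = (G.run o d n).2 v := by
  by_cases hd : (G.run o d n).1 = d
  · rw [run_succ, if_pos hd]
  · rw [run_succ_of_ne hd]
    exact Function.update_of_ne (Ne.symm h) _ _

theorem snd_run_succ_self (hd : (G.run o d n).1 ≠ d) :
    (G.run o d (n + 1)).2 (G.run o d n).1 = !(G.run o d n).2 (G.run o d n).1 := by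
  rw [run_succ_of_ne hd]
  exact Function.update_self _ _ _

theorem snd_run_of_next_visit {v : V} (hv : (G.run o d n).1 = v) (hd : v ≠ d) (hnm : n < m)
    (hnext : ∀ j, n < j → j < m → (G.run o d j).1 ≠ v) :
    (G.run o d m).2 v = !(G.run o d n).2 v := by
  induction m, hnm using Nat.le_induction with
  | base => subst hv; exact snd_run_succ_self hd
  | succ m hm ih =>
    rw [snd_run_succ_of_ne (hnext m hm (by omega))]
    exact ih fun j hj hjm => hnext j hj (by omega)

theorem frequently_visit_snd_eq (hnt : ∀ n, (G.run o d n).1 ≠ d) {v : V}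
    (hv : ∃ᶠ n in atTop, (G.run o d n).1 = v) (b : Bool) :
    ∃ᶠ n in atTop, (G.run o d n).1 = v ∧ (G.run o d n).2 v = b := by
  rw [frequently_atTop] at hv ⊢
  intro N
  obtain ⟨n, hNn, hn⟩ := hv N
  by_cases hb : (G.run o d n).2 v = b
  · exact ⟨n, hNn, hn, hb⟩
  have hrevisit : ∃ m, n < m ∧ (G.run o d m).1 = v := hv (n + 1)
  have hfirst := Nat.find_spec hrevisit
  refine ⟨Nat.find hrevisit, by omega, hfirst.2, ?_⟩
  rw [snd_run_of_next_visit hn (hn ▸ hnt n) hfirst.1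
    fun j hnj hj => fun hjv => Nat.find_min hrevisit hj ⟨hnj, hjv⟩]
  cases b <;> simpa using hb

theorem frequently_visit_of_stepRel (hnt : ∀ n, (G.run o d n).1 ≠ d) {v u : V}
    (hv : ∃ᶠ n in atTop, (G.run o d n).1 = v) (hvu : G.stepRel v u) :
    ∃ᶠ n in atTop, (G.run o d n).1 = u := by
  obtain ⟨b, hb⟩ : ∃ b, G.succ v b = u := by
    rcases hvu with h | h
    exacts [⟨false, h⟩, ⟨true, h⟩]
  refine (tendsto_add_atTop_nat 1).frequently ?_
  refine (frequently_visit_snd_eq hnt hv b).mono fun n ⟨hnv, hnb⟩ => ?_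
  rw [fst_run_succ_of_ne (hnt n), hnv, hnb, hb]

theorem exists_deadEnd_run_of_not_terminates [Finite V] (hnt : ¬ G.Terminates o d) :
    ∃ n, G.DeadEnd d (G.run o d n).1 := by
  by_contra! hlive
  have hnd : ∀ n, (G.run o d n).1 ≠ d := fun n h => hnt ⟨n, h⟩
  obtain ⟨v, hv⟩ : ∃ v, ∃ᶠ n in atTop, (G.run o d n).1 = v :=
    frequently_exists.mp (Frequently.of_forall fun n => ⟨_, rfl⟩)
  have hvd : ReflTransGen G.stepRel v d := by
    obtain ⟨n, rfl⟩ := hv.exists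
    exact not_not.mp (hlive n)
  have hd : ∃ᶠ n in atTop, (G.run o d n).1 = d := by
    induction hvd using ReflTransGen.head_induction_on with
    | refl => exact hv
    | head hvu _ ih => exact ih (frequently_visit_of_stepRel hnd hv hvu)
  obtain ⟨n, hn⟩ := hd.exists
  exact hnd n hn

theorem fst_run_of_self_loop {W : Type} [DecidableEq W] {K : SwitchGraph W} {o e c : W}
    (hc : c ≠ e) (hloop : ∀ b, K.succ c b = c) (h : (K.run o e n).1 = c) (hnm : n ≤ m) :
    (K.run o e m).1 = c := by
  induction m, hnm using Nat.le_induction with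
  | base => exact h
  | succ m _ ih => rw [fst_run_succ_of_ne (ih ▸ hc), ih, hloop]

/-- `none` plays the role of the new destination `d̄`, whose successors are unconstrained. -/
structure IsDeadEndRedirection (G : SwitchGraph V) (d : V) (H : SwitchGraph (Option V)) :
    Prop where
  succ_dest : ∀ b, H.succ (some d) b = some d
  succ_deadEnd : ∀ v, v ≠ d → G.DeadEnd d v → ∀ b, H.succ (some v) b = none
  succ_live : ∀ v, v ≠ d → ¬ G.DeadEnd d v → ∀ b, H.succ (some v) b = some (G.succ v b)

def liftState (p : V × (V → Bool)) : Option V × (Option V → Bool) :=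
  (some p.1, fun x => x.elim false p.2)

namespace IsDeadEndRedirection

variable {H : SwitchGraph (Option V)}

theorem run_eq_liftState (hH : IsDeadEndRedirection G d H)
    (hlive : ∀ m < n, (G.run o d m).1 ≠ d ∧ ¬ G.DeadEnd d (G.run o d m).1) :
    H.run (some o) none n = liftState (G.run o d n) := by
  induction n with
  | zero => exact Prod.ext rfl (funext fun x => by cases x <;> rfl)
  | succ n ih =>
    obtain ⟨hnd, hnlive⟩ := hlive n n.lt_succ_self
    have ih := ih fun m hm => hlive m (hm.trans n.lt_succ_self)
    rw [run_succ_of_ne (by rw [ih]; exact Option.some_ne_none _), ih, run_succ_of_ne hnd]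
    refine Prod.ext (hH.succ_live _ hnd hnlive _) (funext fun x => ?_)
    cases x <;> simp [step, liftState, Function.update_apply]

theorem not_terminates_of_terminates (hH : IsDeadEndRedirection G d H)
    (ht : G.Terminates o d) : ¬ H.Terminates (some o) none := by
  have hN : (G.run o d (Nat.find ht)).1 = d := Nat.find_spec ht
  have hmirror : ∀ n ≤ Nat.find ht, H.run (some o) none n = liftState (G.run o d n) :=
    fun n hn => hH.run_eq_liftState fun m hm =>
      ⟨Nat.find_min ht (hm.trans_le hn), not_deadEnd_run_of_terminates ht m⟩
  rintro ⟨n, hn⟩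
  rcases le_total n (Nat.find ht) with hle | hge
  · rw [hmirror n hle] at hn
    exact Option.some_ne_none _ hn
  · have hd := fst_run_of_self_loop (Option.some_ne_none d) hH.succ_dest
      (by rw [hmirror _ le_rfl, liftState, hN]) hge
    rw [hd] at hn
    exact Option.some_ne_none _ hn

theorem terminates_of_not_terminates [Finite V] (hH : IsDeadEndRedirection G d H)
    (hnt : ¬ G.Terminates o d) : H.Terminates (some o) none := by
  have hdead := exists_deadEnd_run_of_not_terminates hnt
  have hnd : ∀ m, (G.run o d m).1 ≠ d := fun m h => hnt ⟨m, h⟩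
  have hmirror := hH.run_eq_liftState fun m hm => ⟨hnd m, Nat.find_min hdead hm⟩
  refine ⟨Nat.find hdead + 1, ?_⟩
  rw [fst_run_succ_of_ne (by rw [hmirror]; exact Option.some_ne_none _), hmirror]
  exact hH.succ_deadEnd _ (hnd _) (Nat.find_spec hdead) _

theorem terminates_iff_not_terminates [Finite V] (hH : IsDeadEndRedirection G d H) :
    G.Terminates o d ↔ ¬ H.Terminates (some o) none :=
  ⟨hH.not_terminates_of_terminates, not_imp_comm.mp hH.terminates_of_not_terminates⟩

end IsDeadEndRedirection

end SwitchGraph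

theorem stmt14 {V : Type} [Fintype V] [DecidableEq V] (G : SwitchGraph V) (o d : V)
    (a b : Option V) :
    G.Terminates o d ↔
      ¬ SwitchGraph.Terminates
        { s0 := fun x => match x with
            | none => a
            | some v => if v = d then some d
                else if G.DeadEnd d v then none else some (G.s0 v),
          s1 := fun x => match x with
            | none => b
            | some v => if v = d then some d
                else if G.DeadEnd d v then none else some (G.s1 v) }
        (some o) none := by
  refine IsDeadEndRedirection.terminates_iff_not_terminates ⟨?_, ?_, ?_⟩
  · intro c
    cases c <;> simp [succ]
  · intro v hvd hdead c
    cases c <;> simp [succ, hvd, hdead]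
  · intro v hvd hlive c
    cases c <;> simp [succ, hvd, hlive]
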